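/- arXiv:1802.04836 — 2 statements merged into one kernel-verified Lean document; each statement's English description precedes it below -/
import Mathlib

section
/- The limit of the reachability iterates exists and satisfies the Bellman fixed-point equation: let S be a nonempty finite type, M : S → S → ℝ with nonnegative entries and all row sums equal to 1, and D ⊆ S. Define r₀ s = 1 if s ∈ D and 0 otherwise, and r_{n+1} s = 1 if s ∈ D and r_{n+1} s = ∑_{s'} M s s' * r_n s' otherwise. Then for every s the sequence (r_n s) converges to a limit r s with 0 ≤ r s ≤ 1, and the limit satisfies r s = 1 for s ∈ D and r s = ∑_{s'} M s s' * r s' for s ∉ D. -/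
open Finset

/-- `reachIter M D n s` is the probability of reaching the target set `D`
from state `s` within `n` steps in the Markov chain with transition matrix
`M`. -/
noncomputable def reachIter {S : Type*} [Fintype S] (M : S → S → ℝ)
    (D : Set S) [DecidablePred (· ∈ D)] : ℕ → S → ℝ
  | 0 => fun s => if s ∈ D then 1 else 0
  | n + 1 => fun s => if s ∈ D then 1 else ∑ s', M s s' * reachIter M D n s'

/-!
The iterates are `T^[n] r₀` for the Bellman operator `T = bellmanOp M D`, which is monotone
(as `M ≥ 0`), continuous, satisfies `r₀ ≤ T r₀`, and preserves `r ≤ 1` (as the rows of `M` sum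
to `1`). Hence the iterates increase and stay below `1`, so they converge to their supremum, which
is a fixed point of `T` by continuity.
-/

open Filter Topology

namespace reachIter

variable {S : Type*} [Fintype S] (M : S → S → ℝ) (D : Set S) [DecidablePred (· ∈ D)]

def bellmanOp (r : S → ℝ) : S → ℝ := fun s => if s ∈ D then 1 else ∑ s', M s s' * r s'

theorem succ_eq_bellmanOp (n : ℕ) :
    reachIter M D (n + 1) = bellmanOp M D (reachIter M D n) := rfl

theorem eq_bellmanOp_iterate (n : ℕ) :
    reachIter M D n = (bellmanOp M D)^[n] (reachIter M D 0) := by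
  induction n with
  | zero => rfl
  | succ n ih => rw [succ_eq_bellmanOp, ih, Function.iterate_succ_apply']

theorem continuous_bellmanOp : Continuous (bellmanOp M D) :=
  continuous_pi fun s => by
    unfold bellmanOp
    split
    · exact continuous_const
    · fun_prop

theorem zero_nonneg : 0 ≤ reachIter M D 0 := fun s => by
  simp only [reachIter]
  split <;> norm_num

variable {M}

theorem monotone_bellmanOp (hM0 : ∀ s s', 0 ≤ M s s') : Monotone (bellmanOp M D) :=
    fun r r' h s => by
  unfold bellmanOp
  split
  · rfl
  · exact sum_le_sum fun s' _ => mul_le_mul_of_nonneg_left (h s') (hM0 s s')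

theorem bellmanOp_le_one (hM0 : ∀ s s', 0 ≤ M s s') (hM1 : ∀ s, ∑ s', M s s' = 1) {r : S → ℝ}
    (hr : r ≤ 1) : bellmanOp M D r ≤ 1 := fun s => by
  unfold bellmanOp
  split
  · rfl
  · calc ∑ s', M s s' * r s' ≤ ∑ s', M s s' * 1 :=
          sum_le_sum fun s' _ => mul_le_mul_of_nonneg_left (hr s') (hM0 s s')
      _ = 1 := by simp only [mul_one, hM1]

theorem zero_le_bellmanOp_zero (hM0 : ∀ s s', 0 ≤ M s s') :
    reachIter M D 0 ≤ bellmanOp M D (reachIter M D 0) := fun s => by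
  simp only [bellmanOp, reachIter]
  split
  · rfl
  · exact sum_nonneg fun s' _ => mul_nonneg (hM0 s s') (zero_nonneg M D s')

theorem monotone (hM0 : ∀ s s', 0 ≤ M s s') : Monotone (reachIter M D) := by
  simpa only [← eq_bellmanOp_iterate] using
    (monotone_bellmanOp D hM0).monotone_iterate_of_le_map (zero_le_bellmanOp_zero D hM0)

theorem le_one (hM0 : ∀ s s', 0 ≤ M s s') (hM1 : ∀ s, ∑ s', M s s' = 1) (n : ℕ) :
    reachIter M D n ≤ 1 := by
  induction n with
  | zero => exact fun s => by simp only [reachIter]; split <;> norm_num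
  | succ n ih => exact bellmanOp_le_one D hM0 hM1 ih

theorem tendsto_iSup (hM0 : ∀ s s', 0 ≤ M s s') (hM1 : ∀ s, ∑ s', M s s' = 1) :
    Tendsto (reachIter M D) atTop (𝓝 (⨆ n, reachIter M D n)) :=
  tendsto_atTop_ciSup (monotone D hM0) ⟨1, Set.forall_mem_range.2 (le_one D hM0 hM1)⟩

theorem bellmanOp_iSup (hM0 : ∀ s s', 0 ≤ M s s') (hM1 : ∀ s, ∑ s', M s s' = 1) :
    bellmanOp M D (⨆ n, reachIter M D n) = ⨆ n, reachIter M D n := by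
  refine isFixedPt_of_tendsto_iterate (x := reachIter M D 0) ?_
    (continuous_bellmanOp M D).continuousAt
  simpa only [← eq_bellmanOp_iterate] using tendsto_iSup D hM0 hM1

end reachIter

theorem reachIter_tendsto_fixedPoint_general {S : Type*} [Fintype S]
    (M : S → S → ℝ) (hM0 : ∀ s s', 0 ≤ M s s') (hM1 : ∀ s, ∑ s', M s s' = 1)
    (D : Set S) [DecidablePred (· ∈ D)] :
    ∃ r : S → ℝ, ∀ s : S,
      Filter.Tendsto (fun n => reachIter M D n s) Filter.atTop (nhds (r s)) ∧
      0 ≤ r s ∧ r s ≤ 1 ∧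
      (s ∈ D → r s = 1) ∧
      (s ∉ D → r s = ∑ s', M s s' * r s') := by
  have htend := reachIter.tendsto_iSup D hM0 hM1
  have hfix := reachIter.bellmanOp_iSup D hM0 hM1
  set r := ⨆ n, reachIter M D n
  have hnonneg : 0 ≤ r := ge_of_tendsto' htend fun n =>
    (reachIter.zero_nonneg M D).trans (reachIter.monotone D hM0 n.zero_le)
  have hle : r ≤ 1 := le_of_tendsto' htend (reachIter.le_one D hM0 hM1)
  refine ⟨r, fun s => ⟨tendsto_pi_nhds.1 htend s, hnonneg s, hle s, fun hs => ?_, fun hs => ?_⟩⟩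
  · rw [← hfix, reachIter.bellmanOp, if_pos hs]
  · conv_lhs => rw [← hfix, reachIter.bellmanOp, if_neg hs]

/-- The limit of the reachability iterates exists and satisfies the Bellman
fixed-point equation: `r_n s → r s` with `0 ≤ r s ≤ 1`, `r s = 1` on `D`, and
`r s = ∑ s', M s s' * r s'` off `D`. -/
theorem reachIter_tendsto_fixedPoint {S : Type*} [Fintype S] [Nonempty S]
    (M : S → S → ℝ) (hM0 : ∀ s s', 0 ≤ M s s') (hM1 : ∀ s, ∑ s', M s s' = 1)
    (D : Set S) [DecidablePred (· ∈ D)] :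
    ∃ r : S → ℝ, ∀ s : S,
      Filter.Tendsto (fun n => reachIter M D n s) Filter.atTop (nhds (r s)) ∧
      0 ≤ r s ∧ r s ≤ 1 ∧
      (s ∈ D → r s = 1) ∧
      (s ∉ D → r s = ∑ s', M s s' * r s') :=
  reachIter_tendsto_fixedPoint_general M hM0 hM1 D
end

section
/- The sum of entries of a vector–matrix product through quasi-posynomial factors is a posynomial at feasible points: let π₀ : Fin n → ℝ be a fixed vector with nonnegative entries, not all zero, and let A₁, …, A_L be n × n matrices of functions (Fin m → ℝ) → ℝ, each entry of each A_ℓ being either the identically-zero function or a posynomial. Suppose that for some v₀ in the positive orthant the row vector π₀ ⬝ A₁(v₀) ⬝ ⋯ ⬝ A_L(v₀) is not the zero vector. Then the function v ↦ ∑_{j} (π₀ ⬝ A₁(v) ⬝ ⋯ ⬝ A_L(v)) j agrees with a posynomial on the positive orthant. -/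
/-- A posynomial in `m` positive real variables. -/
def IsPosynomial {m : ℕ} (f : (Fin m → ℝ) → ℝ) : Prop :=
  ∃ K : ℕ, 0 < K ∧ ∃ (c : Fin K → ℝ) (a : Fin m → Fin K → ℝ),
    (∀ k, 0 < c k) ∧ ∀ v : Fin m → ℝ, f v = ∑ k, c k * ∏ i, (v i) ^ (a i k)

/-- An entry of a quasi-posynomial matrix: either identically zero or a
posynomial. -/
def IsQuasiEntry {m : ℕ} (f : (Fin m → ℝ) → ℝ) : Prop :=
  (∀ v, f v = 0) ∨ IsPosynomial f

/-- The evaluation of a matrix of functions at a point `v`. -/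
def evalMatrix {n m : ℕ} (A : Matrix (Fin n) (Fin n) ((Fin m → ℝ) → ℝ))
    (v : Fin m → ℝ) : Matrix (Fin n) (Fin n) ℝ :=
  Matrix.of fun i j => A i j v

/-!
Call a function an orthant posynomial if on the positive orthant it is a sum of monomials with
positive coefficients, the empty sum allowed. Orthant posynomials form a subsemiring of
`(Fin m → ℝ) → ℝ` containing every quasi-posynomial entry and every nonnegative constant, so each
entry of `π₀ ⬝ A₁ ⬝ ⋯ ⬝ A_L`, computed in the matrix ring over functions, is one, and so is the
entry sum. An orthant posynomial is nonnegative on the orthant, and one that is positive somewhere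
there is not the empty sum, hence agrees with a posynomial on the orthant.
-/

open Matrix

def positiveOrthant (m : ℕ) : Set (Fin m → ℝ) := {v | ∀ i, 0 < v i}

def IsOrthantPosynomial {m : ℕ} (f : (Fin m → ℝ) → ℝ) : Prop :=
  ∃ (K : ℕ) (c : Fin K → ℝ) (a : Fin m → Fin K → ℝ), (∀ k, 0 < c k) ∧
    ∀ v ∈ positiveOrthant m, f v = ∑ k, c k * ∏ i, v i ^ a i k

namespace IsOrthantPosynomial

variable {m : ℕ} {f g : (Fin m → ℝ) → ℝ}

theorem zero : IsOrthantPosynomial (0 : (Fin m → ℝ) → ℝ) :=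
  ⟨0, finZeroElim, fun _ => finZeroElim, finZeroElim, fun _ _ => by simp⟩

theorem const {r : ℝ} (hr : 0 ≤ r) : IsOrthantPosynomial (fun _ : Fin m → ℝ => r) := by
  rcases hr.eq_or_lt with rfl | hr
  · exact zero
  · exact ⟨1, fun _ => r, fun _ _ => 0, fun _ => hr, fun _ _ => by simp⟩

theorem add (hf : IsOrthantPosynomial f) (hg : IsOrthantPosynomial g) :
    IsOrthantPosynomial (f + g) := by
  obtain ⟨K, c, a, hc, hf⟩ := hf
  obtain ⟨K', c', a', hc', hg⟩ := hg
  refine ⟨K + K', Fin.append c c', fun i => Fin.append (a i) (a' i),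
    Fin.addCases (by simpa using hc) (by simpa using hc'), fun v hv => ?_⟩
  simp [Fin.sum_univ_add, hf v hv, hg v hv]

theorem mul (hf : IsOrthantPosynomial f) (hg : IsOrthantPosynomial g) :
    IsOrthantPosynomial (f * g) := by
  obtain ⟨K, c, a, hc, hf⟩ := hf
  obtain ⟨K', c', a', hc', hg⟩ := hg
  let e : Fin (K * K') ≃ Fin K × Fin K' := finProdFinEquiv.symm
  refine ⟨K * K', fun k => c (e k).1 * c' (e k).2, fun i k => a i (e k).1 + a' i (e k).2,
    fun k => mul_pos (hc _) (hc' _), fun v hv => ?_⟩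
  have monomial_add : ∀ k k', ∏ i, v i ^ (a i k + a' i k')
      = (∏ i, v i ^ a i k) * ∏ i, v i ^ a' i k' := fun k k' => by
    rw [← Finset.prod_mul_distrib]
    exact Finset.prod_congr rfl fun i _ => Real.rpow_add (hv i) _ _
  rw [Pi.mul_apply, hf v hv, hg v hv, Finset.sum_mul_sum, ← Finset.sum_product',
    ← e.symm.sum_comp]
  refine Finset.sum_congr rfl fun p _ => ?_
  simp only [e, Equiv.symm_symm, Equiv.symm_apply_apply, monomial_add]
  ring

theorem nonneg (hf : IsOrthantPosynomial f) {v : Fin m → ℝ} (hv : v ∈ positiveOrthant m) :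
    0 ≤ f v := by
  obtain ⟨K, c, a, hc, hf⟩ := hf
  rw [hf v hv]
  exact Finset.sum_nonneg fun k _ =>
    mul_nonneg (hc k).le (Finset.prod_nonneg fun i _ => (Real.rpow_pos_of_pos (hv i) _).le)

theorem exists_isPosynomial_eqOn (hf : IsOrthantPosynomial f) {v₀ : Fin m → ℝ}
    (hv₀ : v₀ ∈ positiveOrthant m) (hpos : 0 < f v₀) :
    ∃ h, IsPosynomial h ∧ Set.EqOn f h (positiveOrthant m) := by
  obtain ⟨K, c, a, hc, hf⟩ := hf
  have hK : 0 < K := by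
    refine Nat.pos_of_ne_zero fun hK => hpos.ne' ?_
    subst hK
    simp [hf v₀ hv₀]
  exact ⟨fun v => ∑ k, c k * ∏ i, v i ^ a i k, ⟨K, hK, c, a, hc, fun _ => rfl⟩, hf⟩

end IsOrthantPosynomial

def orthantPosynomials (m : ℕ) : Subsemiring ((Fin m → ℝ) → ℝ) where
  carrier := {f | IsOrthantPosynomial f}
  zero_mem' := .zero
  one_mem' := .const zero_le_one
  add_mem' := .add
  mul_mem' := .mul

theorem IsQuasiEntry.mem_orthantPosynomials {m : ℕ} {f : (Fin m → ℝ) → ℝ}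
    (hf : IsQuasiEntry f) : f ∈ orthantPosynomials m := by
  rcases hf with hf | ⟨K, -, c, a, hc, hf⟩
  · rw [show f = 0 from funext hf]
    exact zero_mem _
  · exact ⟨K, c, a, hc, fun v _ => hf v⟩

theorem vecMul_evalMatrix_prod_apply {n m L : ℕ} (π₀ : Fin n → ℝ)
    (A : Fin L → Matrix (Fin n) (Fin n) ((Fin m → ℝ) → ℝ)) (v : Fin m → ℝ) (j : Fin n) :
    vecMul π₀ (List.ofFn fun ℓ => evalMatrix (A ℓ) v).prod j
      = (∑ i, (fun _ => π₀ i) * (List.ofFn A).prod i j : (Fin m → ℝ) → ℝ) v := by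
  have hprod : (List.ofFn fun ℓ => evalMatrix (A ℓ) v).prod
      = (Pi.evalRingHom _ v).mapMatrix (List.ofFn A).prod := by
    rw [map_list_prod, List.map_ofFn]
    rfl
  simp [hprod, vecMul, dotProduct]

theorem vecMul_quasiPosynomial_prod_entrySum_general {n m L : ℕ}
    (π₀ : Fin n → ℝ) (hπ0 : ∀ j, 0 ≤ π₀ j)
    (A : Fin L → Matrix (Fin n) (Fin n) ((Fin m → ℝ) → ℝ))
    (hA : ∀ ℓ i j, IsQuasiEntry (A ℓ i j))
    (v₀ : Fin m → ℝ) (hv₀ : ∀ t, 0 < v₀ t)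
    (hne : Matrix.vecMul π₀ (List.ofFn fun ℓ => evalMatrix (A ℓ) v₀).prod ≠ 0) :
    ∃ h : (Fin m → ℝ) → ℝ, IsPosynomial h ∧
      ∀ v : Fin m → ℝ, (∀ t, 0 < v t) →
        ∑ j, Matrix.vecMul π₀ (List.ofFn fun ℓ => evalMatrix (A ℓ) v).prod j
          = h v := by
  set S := orthantPosynomials m
  have hprod : (List.ofFn A).prod ∈ S.matrix :=
    list_prod_mem fun M hM => by
      obtain ⟨ℓ, rfl⟩ := List.mem_ofFn.mp hM
      exact fun i j => (hA ℓ i j).mem_orthantPosynomials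
  set entry : Fin n → (Fin m → ℝ) → ℝ := fun j => ∑ i, (fun _ => π₀ i) * (List.ofFn A).prod i j
  have hentry j : entry j ∈ S :=
    sum_mem fun i _ => mul_mem (IsOrthantPosynomial.const (hπ0 i)) (hprod i j)
  obtain ⟨j₀, hj₀⟩ := Function.ne_iff.mp hne
  rw [vecMul_evalMatrix_prod_apply, Pi.zero_apply] at hj₀
  have hpos : 0 < (∑ j, entry j) v₀ := by
    rw [Finset.sum_apply]
    exact Finset.sum_pos' (fun j _ => (hentry j).nonneg hv₀)
      ⟨j₀, Finset.mem_univ _, ((hentry j₀).nonneg hv₀).lt_of_ne' hj₀⟩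
  obtain ⟨h, hh, heq⟩ :=
    IsOrthantPosynomial.exists_isPosynomial_eqOn (sum_mem fun j _ => hentry j) hv₀ hpos
  refine ⟨h, hh, fun v hv => ?_⟩
  simp only [vecMul_evalMatrix_prod_apply]
  rw [← heq hv, Finset.sum_apply]

/-- The entry sum of the row vector `π₀ ⬝ A₁(v) ⬝ ⋯ ⬝ A_L(v)`, where `π₀` is
a fixed nonnegative nonzero vector and the `A_ℓ` are quasi-posynomial
matrices, agrees with a posynomial on the positive orthant, provided the row
vector is nonzero at some point `v₀` of the positive orthant. -/
theorem vecMul_quasiPosynomial_prod_entrySum {n m L : ℕ}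
    (π₀ : Fin n → ℝ) (hπ0 : ∀ j, 0 ≤ π₀ j) (hπne : π₀ ≠ 0)
    (A : Fin L → Matrix (Fin n) (Fin n) ((Fin m → ℝ) → ℝ))
    (hA : ∀ ℓ i j, IsQuasiEntry (A ℓ i j))
    (v₀ : Fin m → ℝ) (hv₀ : ∀ t, 0 < v₀ t)
    (hne : Matrix.vecMul π₀ (List.ofFn fun ℓ => evalMatrix (A ℓ) v₀).prod ≠ 0) :
    ∃ h : (Fin m → ℝ) → ℝ, IsPosynomial h ∧
      ∀ v : Fin m → ℝ, (∀ t, 0 < v t) →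
        ∑ j, Matrix.vecMul π₀ (List.ofFn fun ℓ => evalMatrix (A ℓ) v).prod j
          = h v :=
  vecMul_quasiPosynomial_prod_entrySum_general π₀ hπ0 A hA v₀ hv₀ hne
end
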